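/- Write the characteristic polynomial of the transfer matrix as det(z·I_{2m} − T(E)) = z^{2m} + Σ_{j=1}^{2m} a_j(E)·z^{2m−j}. Then for each j = 1,…,2m the coefficient a_j is a polynomial function of E of degree at most min(j, 2m−j)·n; that is, there exists a polynomial p_j ∈ ℂ[X] with deg p_j ≤ min(j, 2m−j)·n such that a_j(E) = p_j(E) for all E ∈ ℂ. -/

import Mathlib

/-! Replacing `E` by an indeterminate turns `T` into a product of `n` matrices over `ℂ[X]` with
entries of degree `≤ 1`, and each factor has an inverse of the same shape,
`[[0, 1], [-C⁻¹B, C⁻¹(E - A)]]`; so the entries of `T` and of `T⁻¹` have degree `≤ n`.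
The coefficient of `z^(2m-j)` in `det (z - T)` is a form of degree `j` in the entries of `T`, which
gives the bound `jn`. Since `det T` is a unit of `ℂ[X]`, it is a constant, and reversing the
characteristic polynomial, `z^(2m) det (1/z - T) = det T · det (z - T⁻¹)`, exhibits the same
coefficient as a constant multiple of a form of degree `2m - j` in the entries of `T⁻¹`. -/

open Matrix

noncomputable def tstep {m : ℕ} (A B C : Matrix (Fin m) (Fin m) ℂ) (E : ℂ) :
    Matrix (Fin m ⊕ Fin m) (Fin m ⊕ Fin m) ℂ :=
  Matrix.fromBlocks (B⁻¹ * (E • 1 - A)) (-(B⁻¹ * C)) 1 0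

/-- The transfer matrix `T(E) = t_n(E) ⋯ t_1(E)` (0-indexed: `t_{n-1} ⋯ t_0`). -/
noncomputable def transfer {n m : ℕ} (A B C : Fin n → Matrix (Fin m) (Fin m) ℂ) (E : ℂ) :
    Matrix (Fin m ⊕ Fin m) (Fin m ⊕ Fin m) ℂ :=
  ((List.ofFn fun k : Fin n => tstep (A k) (B k) (C k) E).reverse).prod

open Polynomial

namespace MvPolynomial

theorem natDegree_aeval_le_totalDegree_mul {σ R : Type*} [CommSemiring R] {D : ℕ} {f : σ → R[X]}
    (hf : ∀ i, (f i).natDegree ≤ D) (p : MvPolynomial σ R) :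
    (aeval f p).natDegree ≤ p.totalDegree * D := by
  rw [aeval_eq_eval₂Hom, coe_eval₂Hom, eval₂_eq]
  refine natDegree_sum_le_of_forall_le _ _ fun s hs => ?_
  calc _ ≤ 0 + ∑ i ∈ s.support, s i * D := by
        refine natDegree_mul_le.trans (add_le_add (by simp) ?_)
        refine (natDegree_prod_le _ _).trans (Finset.sum_le_sum fun i _ => ?_)
        exact natDegree_pow_le.trans (Nat.mul_le_mul_left _ (hf i))
    _ ≤ p.totalDegree * D := by
        rw [zero_add, ← Finset.sum_mul]
        exact Nat.mul_le_mul_right _ (le_totalDegree hs)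

end MvPolynomial

theorem Matrix.natDegree_mul_apply_le {l m o R : Type*} [Fintype m] [Semiring R] {a b : ℕ}
    {M : Matrix l m R[X]} {N : Matrix m o R[X]} (hM : ∀ i j, (M i j).natDegree ≤ a)
    (hN : ∀ i j, (N i j).natDegree ≤ b) (i : l) (k : o) : ((M * N) i k).natDegree ≤ a + b :=
  natDegree_sum_le_of_forall_le _ _ fun j _ =>
    natDegree_mul_le.trans (add_le_add (hM i j) (hN j k))

theorem Matrix.natDegree_list_prod_apply_le {n R : Type*} [Fintype n] [DecidableEq n] [Semiring R]
    {d : ℕ} {L : List (Matrix n n R[X])} (hL : ∀ M ∈ L, ∀ i j, (M i j).natDegree ≤ d)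
    (i j : n) : (L.prod i j).natDegree ≤ L.length * d := by
  induction L generalizing i j with
  | nil => by_cases h : i = j <;> simp [h]
  | cons M L ih =>
    rw [List.prod_cons, List.length_cons, add_mul, one_mul, add_comm]
    exact natDegree_mul_apply_le (hL M List.mem_cons_self)
      (ih fun N hN => hL N (List.mem_cons_of_mem _ hN)) i j

theorem Matrix.natDegree_charpoly_coeff_le {n R : Type*} [Fintype n] [DecidableEq n] [CommRing R]
    {D : ℕ} {M : Matrix n n R[X]} (hM : ∀ i j, (M i j).natDegree ≤ D) (k : ℕ) :
    (M.charpoly.coeff k).natDegree ≤ (Fintype.card n - k) * D := by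
  nontriviality R
  have hM' : Matrix.of (Function.curry fun p : n × n => M p.1 p.2) = M := rfl
  have hcoeff : M.charpoly.coeff k =
      MvPolynomial.aeval (fun p : n × n => M p.1 p.2) ((charpoly.univ R n).coeff k) := by
    rw [MvPolynomial.aeval_eq_eval₂Hom, algebraMap_eq, charpoly.univ_coeff_eval₂Hom, hM']
  have hdeg := MvPolynomial.natDegree_aeval_le_totalDegree_mul (fun p : n × n => hM p.1 p.2)
    ((charpoly.univ R n).coeff k)
  rw [hcoeff]
  refine hdeg.trans (Nat.mul_le_mul_right _ ?_)
  rcases le_or_gt k (Fintype.card n) with hk | hk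
  · exact (charpoly.univ_coeff_isHomogeneous R n k _ (by omega)).totalDegree_le
  · rw [coeff_eq_zero_of_natDegree_lt (by rwa [charpoly.univ_natDegree]),
      MvPolynomial.totalDegree_zero]
    exact Nat.zero_le _

theorem Matrix.charpolyRev_eq_of_mul_eq_one {n R : Type*} [Fintype n] [DecidableEq n] [CommRing R]
    {M M' : Matrix n n R} (h : M * M' = 1) :
    M.charpolyRev = (-1) ^ Fintype.card n * C M.det * M'.charpoly := by
  have hdet : IsUnit M.det := isUnit_det_of_right_inverse h
  rw [← inv_eq_right_inv h, charpoly_inv M ((isUnit_iff_isUnit_det M).mpr hdet),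
    ← mul_assoc, ← mul_assoc, mul_right_comm _ (C M.det), ← pow_add, ← two_mul, pow_mul,
    neg_one_sq, one_pow, one_mul, ← C_mul, Ring.mul_inverse_cancel _ hdet, C_1, one_mul]

theorem Matrix.natDegree_charpoly_coeff_le_of_mul_eq_one {n R : Type*} [Fintype n] [DecidableEq n]
    [CommRing R] [IsDomain R] {D : ℕ} {M M' : Matrix n n R[X]} (h : M * M' = 1)
    (hM' : ∀ i j, (M' i j).natDegree ≤ D) (k : ℕ) :
    (M.charpoly.coeff k).natDegree ≤ k * D := by
  rcases le_or_gt k (Fintype.card n) with hk | hk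
  · have hconst : ((-1) ^ Fintype.card n * M.det).natDegree = 0 :=
      natDegree_eq_zero_of_isUnit (((isUnit_neg_one).pow _).mul (isUnit_det_of_right_inverse h))
    have hrev : M.charpoly.coeff k =
        ((-1) ^ Fintype.card n * M.det) * M'.charpoly.coeff (Fintype.card n - k) := by
      have hC : ((-1) ^ Fintype.card n * C M.det : R[X][X]) =
          C ((-1) ^ Fintype.card n * M.det) := by
        simp
      calc M.charpoly.coeff k = M.charpoly.reverse.coeff (Fintype.card n - k) := by
            rw [coeff_reverse, charpoly_natDegree_eq_dim, revAt_le (Nat.sub_le _ _),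
              Nat.sub_sub_self hk]
        _ = _ := by rw [reverse_charpoly, charpolyRev_eq_of_mul_eq_one h, hC, coeff_C_mul]
    rw [hrev]
    refine natDegree_mul_le.trans ?_
    have hcoeff' := natDegree_charpoly_coeff_le hM' (Fintype.card n - k)
    rw [Nat.sub_sub_self hk] at hcoeff'
    omega
  · rw [coeff_eq_zero_of_natDegree_lt (by rwa [charpoly_natDegree_eq_dim])]
    exact Nat.zero_le _

theorem Matrix.fromBlocks_mul_fromBlocks_eq_one {ι R : Type*} [Fintype ι] [DecidableEq ι]
    [Ring R] {P P' Q Q' L : Matrix ι ι R} (hQ : Q * Q' = 1) (hP : Q * P' = P) :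
    fromBlocks (P * L) (-Q) 1 0 * fromBlocks 0 1 (-Q') (P' * L) = 1 := by
  rw [fromBlocks_multiply, ← fromBlocks_one]
  simp [hQ, ← Matrix.mul_assoc, hP]

theorem List.prod_reverse_ofFn_mul_prod_ofFn {M : Type*} [Monoid M] {n : ℕ} {f g : Fin n → M}
    (h : ∀ i, f i * g i = 1) : (List.ofFn f).reverse.prod * (List.ofFn g).prod = 1 := by
  induction n with
  | zero => simp
  | succ n ih =>
    simp only [List.ofFn_succ, List.reverse_cons, List.prod_append, List.prod_cons, List.prod_nil,
      mul_one]
    rw [mul_assoc, ← mul_assoc (f 0), h 0, one_mul]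
    exact ih fun i => h i.succ

section TransferPolynomial

variable {m : ℕ}

noncomputable def tstepPoly (A B C : Matrix (Fin m) (Fin m) ℂ) :
    Matrix (Fin m ⊕ Fin m) (Fin m ⊕ Fin m) ℂ[X] :=
  fromBlocks (B⁻¹.map Polynomial.C * charmatrix A) (-(B⁻¹ * C).map Polynomial.C) 1 0

noncomputable def tstepInvPoly (A B C : Matrix (Fin m) (Fin m) ℂ) :
    Matrix (Fin m ⊕ Fin m) (Fin m ⊕ Fin m) ℂ[X] :=
  fromBlocks 0 1 (-(C⁻¹ * B).map Polynomial.C) (C⁻¹.map Polynomial.C * charmatrix A)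

theorem tstepPoly_map_eval (A B C : Matrix (Fin m) (Fin m) ℂ) (E : ℂ) :
    (tstepPoly A B C).map (evalRingHom E) = tstep A B C E := by
  have hA : (charmatrix A).map (evalRingHom E) = E • 1 - A := by
    ext i j
    by_cases h : i = j <;> simp [h]
  have hconst (P : Matrix (Fin m) (Fin m) ℂ) : (P.map Polynomial.C).map (evalRingHom E) = P := by
    ext; simp
  rw [tstepPoly, tstep, fromBlocks_map, Matrix.map_mul, Matrix.map_neg _ (map_neg _), hA,
    hconst, hconst, Matrix.map_one _ (map_zero _) (map_one _), Matrix.map_zero _ (map_zero _)]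

theorem tstepPoly_mul_tstepInvPoly {A B C : Matrix (Fin m) (Fin m) ℂ} (hB : IsUnit B)
    (hC : IsUnit C) : tstepPoly A B C * tstepInvPoly A B C = 1 := by
  have hB' : B⁻¹ * B = 1 := nonsing_inv_mul B ((isUnit_iff_isUnit_det B).mp hB)
  have hC' : C * C⁻¹ = 1 := mul_nonsing_inv C ((isUnit_iff_isUnit_det C).mp hC)
  refine fromBlocks_mul_fromBlocks_eq_one ?_ ?_ <;>
    rw [← Matrix.map_mul (f := Polynomial.C)]
  · rw [Matrix.mul_assoc, ← Matrix.mul_assoc C, hC', Matrix.one_mul, hB',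
      Matrix.map_one _ (map_zero _) (map_one _)]
  · rw [Matrix.mul_assoc, hC', Matrix.mul_one]

theorem natDegree_map_C_mul_charmatrix_apply_le (P A : Matrix (Fin m) (Fin m) ℂ) (i j : Fin m) :
    ((P.map Polynomial.C * charmatrix A) i j).natDegree ≤ 1 :=
  natDegree_mul_apply_le (a := 0) (b := 1) (fun i j => by simp)
    (fun i j => (charmatrix_apply_natDegree_le i j).trans (by split_ifs <;> simp)) i j

theorem natDegree_tstepPoly_apply_le (A B C : Matrix (Fin m) (Fin m) ℂ)
    (i j : Fin m ⊕ Fin m) : ((tstepPoly A B C) i j).natDegree ≤ 1 := by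
  rcases i with i | i <;> rcases j with j | j <;>
    simp [tstepPoly, natDegree_map_C_mul_charmatrix_apply_le, one_apply, apply_ite,
      -Matrix.map_mul]

theorem natDegree_tstepInvPoly_apply_le (A B C : Matrix (Fin m) (Fin m) ℂ)
    (i j : Fin m ⊕ Fin m) : ((tstepInvPoly A B C) i j).natDegree ≤ 1 := by
  rcases i with i | i <;> rcases j with j | j <;>
    simp [tstepInvPoly, natDegree_map_C_mul_charmatrix_apply_le, one_apply, apply_ite,
      -Matrix.map_mul]

end TransferPolynomial

section Transfer

variable {n m : ℕ}

noncomputable def transferPoly (A B C : Fin n → Matrix (Fin m) (Fin m) ℂ) :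
    Matrix (Fin m ⊕ Fin m) (Fin m ⊕ Fin m) ℂ[X] :=
  (List.ofFn fun k => tstepPoly (A k) (B k) (C k)).reverse.prod

noncomputable def transferInvPoly (A B C : Fin n → Matrix (Fin m) (Fin m) ℂ) :
    Matrix (Fin m ⊕ Fin m) (Fin m ⊕ Fin m) ℂ[X] :=
  (List.ofFn fun k => tstepInvPoly (A k) (B k) (C k)).prod

theorem transferPoly_map_eval (A B C : Fin n → Matrix (Fin m) (Fin m) ℂ) (E : ℂ) :
    (transferPoly A B C).map (evalRingHom E) = transfer A B C E := by
  rw [transferPoly, transfer, ← RingHom.mapMatrix_apply, map_list_prod, List.map_reverse,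
    List.map_ofFn]
  congr 3
  funext k
  exact tstepPoly_map_eval _ _ _ E

theorem transferPoly_mul_transferInvPoly {A B C : Fin n → Matrix (Fin m) (Fin m) ℂ}
    (hB : ∀ k, IsUnit (B k)) (hC : ∀ k, IsUnit (C k)) :
    transferPoly A B C * transferInvPoly A B C = 1 :=
  List.prod_reverse_ofFn_mul_prod_ofFn fun k => tstepPoly_mul_tstepInvPoly (hB k) (hC k)

theorem natDegree_transferPoly_apply_le (A B C : Fin n → Matrix (Fin m) (Fin m) ℂ)
    (i j : Fin m ⊕ Fin m) : ((transferPoly A B C) i j).natDegree ≤ n := by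
  have hsteps : ∀ M ∈ (List.ofFn fun k => tstepPoly (A k) (B k) (C k)).reverse,
      ∀ i j, (M i j).natDegree ≤ 1 := by
    simp only [List.mem_reverse, List.mem_ofFn, forall_exists_index]
    rintro _ k rfl
    exact natDegree_tstepPoly_apply_le _ _ _
  simpa [transferPoly] using natDegree_list_prod_apply_le hsteps i j

theorem natDegree_transferInvPoly_apply_le (A B C : Fin n → Matrix (Fin m) (Fin m) ℂ)
    (i j : Fin m ⊕ Fin m) : ((transferInvPoly A B C) i j).natDegree ≤ n := by
  have hsteps : ∀ M ∈ List.ofFn fun k => tstepInvPoly (A k) (B k) (C k),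
      ∀ i j, (M i j).natDegree ≤ 1 := by
    simp only [List.mem_ofFn, forall_exists_index]
    rintro _ k rfl
    exact natDegree_tstepInvPoly_apply_le _ _ _
  simpa [transferInvPoly] using natDegree_list_prod_apply_le hsteps i j

end Transfer

theorem stmt3 {n m : ℕ}
    (A B C : Fin n → Matrix (Fin m) (Fin m) ℂ)
    (hB : ∀ k, IsUnit (B k)) (hC : ∀ k, IsUnit (C k)) :
    ∀ j : ℕ, 1 ≤ j → j ≤ 2 * m →
      ∃ p : Polynomial ℂ, p.natDegree ≤ min j (2 * m - j) * n ∧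
        ∀ E : ℂ, ((transfer A B C E).charpoly).coeff (2 * m - j) = p.eval E := by
  intro j _ hj
  refine ⟨(transferPoly A B C).charpoly.coeff (2 * m - j), ?_, fun E => ?_⟩
  · have hcard : Fintype.card (Fin m ⊕ Fin m) = 2 * m := by simp [two_mul]
    have h₁ := natDegree_charpoly_coeff_le (natDegree_transferPoly_apply_le A B C) (2 * m - j)
    rw [hcard, Nat.sub_sub_self hj] at h₁
    have h₂ := natDegree_charpoly_coeff_le_of_mul_eq_one (transferPoly_mul_transferInvPoly hB hC)
      (natDegree_transferInvPoly_apply_le A B C) (2 * m - j)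
    rw [← Nat.mul_min_mul_right]
    exact le_min h₁ h₂
  · rw [← transferPoly_map_eval, charpoly_map, coeff_map, coe_evalRingHom]
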